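/- Lagrange–Jacobi identity for planar Kepler-Heisenberg motion: if c is a solution with z(t) = 0 and p_z(t) = 0 for all t, and H₀ denotes its (constant) energy, then the function f(t) = x(t)² + y(t)² satisfies f''(t) = 4H₀ at every time; consequently f(t) = 2H₀·(t − t₀)² + f'(t₀)·(t − t₀) + f(t₀) for any fixed t₀, so the squared radial distance is a quadratic polynomial in time whose leading coefficient has the sign of the energy. -/

import Mathlib

/-!
On the invariant plane `z = p_z = 0` the Heisenberg terms drop out and `H` is the planar
Kepler Hamiltonian `|p|²/2 + V` with `V = -1/(8π r²)`, a potential homogeneous of degree `-2`.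
Hence `(r²)'' = 2|p|² - 2 q·∇V = 2|p|² + 4V = 4H`. As `H ≡ H₀`, integrating twice on the interval
(uniqueness of antiderivatives on a preconnected open set) makes `r²` the stated quadratic.
-/

/-- `P_X = p_x - (1/2) y p_z`, where phase space coordinates are
`(x, y, z, p_x, p_y, p_z) = (p 0, p 1, p 2, p 3, p 4, p 5)`. -/
noncomputable def PX (p : Fin 6 → ℝ) : ℝ := p 3 - (1/2) * p 1 * p 5

/-- `P_Y = p_y + (1/2) x p_z`. -/
noncomputable def PY (p : Fin 6 → ℝ) : ℝ := p 4 + (1/2) * p 0 * p 5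

/-- `Q = (x² + y²)² + 16 z²`. -/
noncomputable def Qf (p : Fin 6 → ℝ) : ℝ := ((p 0)^2 + (p 1)^2)^2 + 16 * (p 2)^2

/-- The Kepler–Heisenberg Hamiltonian `H = (1/2)(P_X² + P_Y²) - (1/(8π)) Q^{-1/2}`. -/
noncomputable def Ham (p : Fin 6 → ℝ) : ℝ :=
  (1/2) * ((PX p)^2 + (PY p)^2) - (1/(8*Real.pi)) * (Qf p) ^ (-(1/2) : ℝ)

/-- A solution of the Kepler–Heisenberg system: a differentiable curve on an open
interval (open preconnected set) `I`, whose position component never vanishes, and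
which satisfies Hamilton's equations for `Ham`. -/
def IsSolutionOn (c : ℝ → Fin 6 → ℝ) (I : Set ℝ) : Prop :=
  IsOpen I ∧ IsPreconnected I ∧
  ∀ t ∈ I,
    (¬ (c t 0 = 0 ∧ c t 1 = 0 ∧ c t 2 = 0)) ∧
    HasDerivAt (fun τ => c τ 0) (fderiv ℝ Ham (c t) (Pi.single 3 1)) t ∧
    HasDerivAt (fun τ => c τ 1) (fderiv ℝ Ham (c t) (Pi.single 4 1)) t ∧
    HasDerivAt (fun τ => c τ 2) (fderiv ℝ Ham (c t) (Pi.single 5 1)) t ∧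
    HasDerivAt (fun τ => c τ 3) (-(fderiv ℝ Ham (c t) (Pi.single 0 1))) t ∧
    HasDerivAt (fun τ => c τ 4) (-(fderiv ℝ Ham (c t) (Pi.single 1 1))) t ∧
    HasDerivAt (fun τ => c τ 5) (-(fderiv ℝ Ham (c t) (Pi.single 2 1))) t

open Real Filter Topology

-- No positivity of `x² + y²` is needed: at the origin both sides use `0 ^ (-1/2) = 0⁻¹ = 0`.
lemma Ham_eq_of_planar {p : Fin 6 → ℝ} (h2 : p 2 = 0) (h5 : p 5 = 0) :
    Ham p = (1/2) * ((p 3)^2 + (p 4)^2) - (1/(8*π)) * ((p 0)^2 + (p 1)^2)⁻¹ := by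
  have hr : 0 ≤ (p 0)^2 + (p 1)^2 := by positivity
  have hQ : (Qf p) ^ (-(1/2) : ℝ) = ((p 0)^2 + (p 1)^2)⁻¹ := by
    rw [Qf, h2, zero_pow two_ne_zero, mul_zero, add_zero, ← rpow_natCast _ 2, ← rpow_mul hr]
    norm_num [rpow_neg_one]
  simp only [Ham, hQ, PX, PY, h5]
  ring

lemma differentiableAt_Ham {p : Fin 6 → ℝ} (hQ : Qf p ≠ 0) : DifferentiableAt ℝ Ham p := by
  have hQf : DifferentiableAt ℝ Qf p := by unfold Qf; fun_prop
  have hrpow := hQf.rpow_const (p := -(1/2)) (Or.inl hQ)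
  unfold Ham PX PY
  fun_prop

lemma fderiv_Ham_apply_of_planar {p v : Fin 6 → ℝ} (h2 : p 2 = 0) (h5 : p 5 = 0)
    (hv2 : v 2 = 0) (hv5 : v 5 = 0) (hr : (p 0)^2 + (p 1)^2 ≠ 0) :
    fderiv ℝ Ham p v = p 3 * v 3 + p 4 * v 4
      + (p 0 * v 0 + p 1 * v 1) / (4 * π * ((p 0)^2 + (p 1)^2)^2) := by
  have hQ : Qf p ≠ 0 := by simpa [Qf, h2] using hr
  have hline : HasDerivAt (fun s : ℝ => p + s • v) v 0 := by
    simpa using ((hasDerivAt_id (0:ℝ)).smul_const v).const_add p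
  have hHam := (differentiableAt_Ham hQ).hasFDerivAt.comp_hasDerivAt_of_eq 0 hline (by simp)
  -- Along a line inside the plane, `H` coincides with the planar Kepler Hamiltonian.
  have heq : (Ham ∘ fun s : ℝ => p + s • v) = fun s => (1/2) * ((p 3 + s * v 3)^2
      + (p 4 + s * v 4)^2) - (1/(8*π)) * ((p 0 + s * v 0)^2 + (p 1 + s * v 1)^2)⁻¹ := by
    funext s
    simp [Ham_eq_of_planar (p := p + s • v) (by simp [h2, hv2]) (by simp [h5, hv5])]
  have hcoord : ∀ i, HasDerivAt (fun s : ℝ => p i + s * v i) (v i) 0 := fun i => by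
    simpa using ((hasDerivAt_id (0:ℝ)).mul_const (v i)).const_add (p i)
  have hplanar := ((((hcoord 3).fun_pow 2).add ((hcoord 4).fun_pow 2)).const_mul (1/2)).sub
    ((((hcoord 0).fun_pow 2).add ((hcoord 1).fun_pow 2)).fun_inv (by simpa using hr)
      |>.const_mul (1/(8*π)))
  rw [heq] at hHam
  rw [hHam.unique hplanar]
  simp only [Pi.add_apply, zero_mul, add_zero]
  field_simp
  ring

theorem IsOpen.eqOn_of_hasDerivAt {s : Set ℝ} (hs : IsOpen s) (hs' : IsPreconnected s)
    {f g f' : ℝ → ℝ} (hf : ∀ t ∈ s, HasDerivAt f (f' t) t) (hg : ∀ t ∈ s, HasDerivAt g (f' t) t)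
    {t₀ : ℝ} (ht₀ : t₀ ∈ s) (h : f t₀ = g t₀) : s.EqOn f g :=
  hs.eqOn_of_deriv_eq hs' (fun t ht => (hf t ht).differentiableAt.differentiableWithinAt)
    (fun t ht => (hg t ht).differentiableAt.differentiableWithinAt)
    (fun t ht => (hf t ht).deriv.trans (hg t ht).deriv.symm) ht₀ h

theorem IsOpen.eqOn_quadratic_of_hasDerivAt_deriv {s : Set ℝ} (hs : IsOpen s)
    (hs' : IsPreconnected s) {f : ℝ → ℝ} {a : ℝ} (hf : ∀ t ∈ s, DifferentiableAt ℝ f t)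
    (hf'' : ∀ t ∈ s, HasDerivAt (deriv f) (2 * a) t) {t₀ : ℝ} (ht₀ : t₀ ∈ s) :
    s.EqOn f fun t => a * (t - t₀)^2 + deriv f t₀ * (t - t₀) + f t₀ := by
  have hlin : ∀ t, HasDerivAt (fun τ => 2 * a * (τ - t₀) + deriv f t₀) (2 * a) t := fun t => by
    simpa using (((hasDerivAt_id t).sub_const t₀).const_mul (2 * a)).add_const (deriv f t₀)
  have hquad : ∀ t, HasDerivAt (fun τ => a * (τ - t₀)^2 + deriv f t₀ * (τ - t₀) + f t₀)
      (2 * a * (t - t₀) + deriv f t₀) t := fun t => by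
    have h := (((((hasDerivAt_id t).sub_const t₀).fun_pow 2).const_mul a).add
      (((hasDerivAt_id t).sub_const t₀).const_mul (deriv f t₀))).add_const (f t₀)
    refine h.congr_deriv ?_
    simp only [id_eq]
    push_cast
    ring
  have hderiv := hs.eqOn_of_hasDerivAt hs' hf'' (fun t _ => hlin t) ht₀ (by simp)
  exact hs.eqOn_of_hasDerivAt hs' (fun t ht => (hf t ht).hasDerivAt.congr_deriv (hderiv ht))
    (fun t _ => hquad t) ht₀ (by simp)

namespace IsSolutionOn

variable {c : ℝ → Fin 6 → ℝ} {I : Set ℝ}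

theorem sq_add_sq_ne_zero (hc : IsSolutionOn c I) {t : ℝ} (ht : t ∈ I) (h2 : c t 2 = 0) :
    (c t 0)^2 + (c t 1)^2 ≠ 0 := by
  intro h
  exact (hc.2.2 t ht).1 ⟨by nlinarith [sq_nonneg (c t 0), sq_nonneg (c t 1)],
    by nlinarith [sq_nonneg (c t 0), sq_nonneg (c t 1)], h2⟩

theorem planar_equations (hc : IsSolutionOn c I) {t : ℝ} (ht : t ∈ I) (h2 : c t 2 = 0)
    (h5 : c t 5 = 0) :
    HasDerivAt (fun τ => c τ 0) (c t 3) t ∧ HasDerivAt (fun τ => c τ 1) (c t 4) t ∧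
    HasDerivAt (fun τ => c τ 3) (-(c t 0 / (4 * π * ((c t 0)^2 + (c t 1)^2)^2))) t ∧
    HasDerivAt (fun τ => c τ 4) (-(c t 1 / (4 * π * ((c t 0)^2 + (c t 1)^2)^2))) t := by
  obtain ⟨-, hx, hy, -, hpx, hpy, -⟩ := hc.2.2 t ht
  have hr := hc.sq_add_sq_ne_zero ht h2
  rw [fderiv_Ham_apply_of_planar h2 h5 (by simp) (by simp) hr] at hx hy hpx hpy
  simp only [Pi.single_eq_same, Pi.single_eq_of_ne, ne_eq, Fin.reduceEq, not_false_eq_true,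
    one_ne_zero, zero_ne_one, mul_one, mul_zero, add_zero, zero_add, zero_div] at hx hy hpx hpy
  exact ⟨hx, hy, hpx, hpy⟩

theorem hasDerivAt_sq_add_sq (hc : IsSolutionOn c I) (hz : ∀ t ∈ I, c t 2 = 0)
    (hpz : ∀ t ∈ I, c t 5 = 0) {t : ℝ} (ht : t ∈ I) :
    HasDerivAt (fun τ => (c τ 0)^2 + (c τ 1)^2) (2 * (c t 0 * c t 3 + c t 1 * c t 4)) t := by
  obtain ⟨hx, hy, -, -⟩ := hc.planar_equations ht (hz t ht) (hpz t ht)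
  refine ((hx.fun_pow 2).add (hy.fun_pow 2)).congr_deriv ?_
  push_cast
  ring

theorem hasDerivAt_deriv_sq_add_sq (hc : IsSolutionOn c I) (hz : ∀ t ∈ I, c t 2 = 0)
    (hpz : ∀ t ∈ I, c t 5 = 0) {t : ℝ} (ht : t ∈ I) :
    HasDerivAt (deriv fun τ => (c τ 0)^2 + (c τ 1)^2) (4 * Ham (c t)) t := by
  obtain ⟨hx, hy, hpx, hpy⟩ := hc.planar_equations ht (hz t ht) (hpz t ht)
  have hderiv : (deriv fun τ => (c τ 0)^2 + (c τ 1)^2)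
      =ᶠ[𝓝 t] fun τ => 2 * (c τ 0 * c τ 3 + c τ 1 * c τ 4) :=
    eventually_of_mem (hc.1.mem_nhds ht) fun τ hτ =>
      (hc.hasDerivAt_sq_add_sq hz hpz hτ).deriv
  have hvirial := (((hx.mul hpx).add (hy.mul hpy)).const_mul 2).congr_of_eventuallyEq hderiv
  refine hvirial.congr_deriv ?_
  have hr := hc.sq_add_sq_ne_zero ht (hz t ht)
  rw [Ham_eq_of_planar (hz t ht) (hpz t ht)]
  field_simp
  ring

end IsSolutionOn

/-- Lagrange–Jacobi identity for planar Kepler–Heisenberg motion: along a solution with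
`z ≡ 0` and `p_z ≡ 0` of constant energy `H₀`, the function `f = x² + y²` satisfies
`f'' = 4 H₀`; consequently `f(t) = 2H₀(t-t₀)² + f'(t₀)(t-t₀) + f(t₀)`. -/
theorem kh_lagrange_jacobi (c : ℝ → Fin 6 → ℝ) (I : Set ℝ) (H0 : ℝ)
    (hc : IsSolutionOn c I)
    (hz : ∀ t ∈ I, c t 2 = 0) (hpz : ∀ t ∈ I, c t 5 = 0)
    (hE : ∀ t ∈ I, Ham (c t) = H0) :
    (∀ t ∈ I,
      HasDerivAt (deriv (fun τ => (c τ 0)^2 + (c τ 1)^2)) (4 * H0) t) ∧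
    ∀ t₀ ∈ I, ∀ t ∈ I,
      (c t 0)^2 + (c t 1)^2 =
        2 * H0 * (t - t₀)^2
          + deriv (fun τ => (c τ 0)^2 + (c τ 1)^2) t₀ * (t - t₀)
          + ((c t₀ 0)^2 + (c t₀ 1)^2) := by
  have hf'' : ∀ t ∈ I, HasDerivAt (deriv (fun τ => (c τ 0)^2 + (c τ 1)^2)) (4 * H0) t :=
    fun t ht => hE t ht ▸ hc.hasDerivAt_deriv_sq_add_sq hz hpz ht
  refine ⟨hf'', fun t₀ ht₀ t ht => ?_⟩
  refine hc.1.eqOn_quadratic_of_hasDerivAt_deriv hc.2.1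
    (fun τ hτ => (hc.hasDerivAt_sq_add_sq hz hpz hτ).differentiableAt)
    (fun τ hτ => by convert hf'' τ hτ using 1; ring) ht₀ ht
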